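/- Let U ≤ G be finite groups, H = kG, R = kU, Q = H/R⁺H, and N the core of U in G (the largest normal subgroup of G contained in U). Then the maximal Hopf ideal contained in the annihilator of the H-module Q equals kN⁺H. -/

import Mathlib

/-!
`kN⁺H` is a Hopf ideal because `N` is normal, and it annihilates `Q` because it is a two-sided
ideal contained in `kU⁺H`. Conversely, if `J` is a Hopf ideal annihilating `Q`, the elements
`g` with `g - 1 ∈ J` form a normal subgroup `N'` of `G`; it lies in `U` (since `g - 1 ∈ kU⁺H`
forces `g ∈ U`), hence in `N`, and `kN'⁺H ⊆ J`. Modulo `kN'⁺H` every element of `J` is a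
combination of representatives of the cosets of `N'`, which are pairwise incongruent modulo
`J`. Group elements that are distinct modulo a coideal `J` are linearly independent modulo
`J`: if `∑ c_g g ∈ J` and `φ` is a functional vanishing on `J`, then `∑ c_g φ(g) g ∈ J`, and
a suitable `φ` deletes any chosen element of the support while keeping another. Hence
`J = kN'⁺H ⊆ kN⁺H`.
-/

open TensorProduct MonoidAlgebra

universe u

variable (k : Type u) [Field k] (G : Type u) [Group G]

/-- The counit of the group Hopf algebra `kG`, `g ↦ 1`. -/
noncomputable def counitG : MonoidAlgebra k G →ₐ[k] k :=
  MonoidAlgebra.lift k k G 1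

/-- The comultiplication of the group Hopf algebra `kG`, `g ↦ g ⊗ g`. -/
noncomputable def comulG :
    MonoidAlgebra k G →ₐ[k] MonoidAlgebra k G ⊗[k] MonoidAlgebra k G :=
  MonoidAlgebra.lift k _ G
    { toFun := fun g => single g (1 : k) ⊗ₜ[k] single g (1 : k)
      map_one' := by simp [Algebra.TensorProduct.one_def, MonoidAlgebra.one_def]
      map_mul' := fun x y => by simp [Algebra.TensorProduct.tmul_mul_tmul, MonoidAlgebra.single_mul_single] }

/-- The antipode of the group Hopf algebra `kG`, `g ↦ g⁻¹`. -/
noncomputable def antipodeG : MonoidAlgebra k G →ₗ[k] MonoidAlgebra k G :=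
  MonoidAlgebra.mapDomainLinearMap k k fun g : G => g⁻¹

/-- A Hopf ideal of the group Hopf algebra `kG`: a two-sided ideal `J` with
`ε(J) = 0`, `Δ(J) ⊆ J ⊗ H + H ⊗ J` and `S(J) ⊆ J`. -/
def IsHopfIdeal (J : Submodule k (MonoidAlgebra k G)) : Prop :=
  (∀ a ∈ J, ∀ h : MonoidAlgebra k G, h * a ∈ J ∧ a * h ∈ J) ∧
  (∀ a ∈ J, counitG k G a = 0) ∧
  (∀ a ∈ J, comulG k G a ∈
    LinearMap.range (TensorProduct.map J.subtype LinearMap.id) ⊔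
      LinearMap.range (TensorProduct.map LinearMap.id J.subtype)) ∧
  (∀ a ∈ J, antipodeG k G a ∈ J)

variable (U : Subgroup G)

/-- The right ideal `(kU)⁺·kG` generated by the augmentation ideal of a
subgroup `U ≤ G`. -/
noncomputable def augIdealOf (V : Subgroup G) : Submodule k (MonoidAlgebra k G) :=
  Submodule.span k {x : MonoidAlgebra k G |
    ∃ u ∈ V, ∃ h : MonoidAlgebra k G, x = (single u (1 : k) - 1) * h}

section

variable {k G} {J : Submodule k (MonoidAlgebra k G)}

@[simp] lemma counitG_single (g : G) (c : k) : counitG k G (single g c) = c := by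
  simp [counitG, lift_single]

@[simp] lemma comulG_single (g : G) (c : k) :
    comulG k G (single g c) = c • (single g (1 : k) ⊗ₜ[k] single g (1 : k)) := by
  simp [comulG, lift_single]

@[simp] lemma antipodeG_single (g : G) (c : k) : antipodeG k G (single g c) = single g⁻¹ c :=
  mapDomainLinearMap_single _ _ _

lemma single_sub_one_mul_mem_augIdealOf {V : Subgroup G} {u : G} (hu : u ∈ V)
    (h : MonoidAlgebra k G) : (single u (1 : k) - 1) * h ∈ augIdealOf k G V :=
  Submodule.subset_span ⟨u, hu, h, rfl⟩

lemma augIdealOf_le_iff {V : Subgroup G} {p : Submodule k (MonoidAlgebra k G)} :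
    augIdealOf k G V ≤ p ↔ ∀ u ∈ V, ∀ h, (single u (1 : k) - 1) * h ∈ p := by
  rw [augIdealOf, Submodule.span_le]
  exact ⟨fun hp u hu h => hp ⟨u, hu, h, rfl⟩,
    by rintro hp _ ⟨u, hu, h, rfl⟩; exact hp u hu h⟩

lemma augIdealOf_mono {V W : Subgroup G} (hVW : V ≤ W) :
    augIdealOf k G V ≤ augIdealOf k G W :=
  augIdealOf_le_iff.mpr fun _ hu => single_sub_one_mul_mem_augIdealOf (hVW hu)

lemma mul_mem_augIdealOf {V : Subgroup G} {a : MonoidAlgebra k G}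
    (ha : a ∈ augIdealOf k G V) (h : MonoidAlgebra k G) : a * h ∈ augIdealOf k G V := by
  refine augIdealOf_le_iff (p := (augIdealOf k G V).comap (LinearMap.mulRight k h)).mpr
    (fun u hu h' => ?_) ha
  simpa [mul_assoc] using single_sub_one_mul_mem_augIdealOf hu (h' * h)

lemma mul_mem_augIdealOf_of_normal {V : Subgroup G} [hV : V.Normal] (h : MonoidAlgebra k G)
    {a : MonoidAlgebra k G} (ha : a ∈ augIdealOf k G V) : h * a ∈ augIdealOf k G V := by
  induction h using induction_linear with
  | zero => simp
  | add h h' hh hh' => simpa only [add_mul] using add_mem hh hh'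
  | single g c =>
    refine augIdealOf_le_iff
      (p := (augIdealOf k G V).comap (LinearMap.mulLeft k (single g c))).mpr
      (fun u hu h' => ?_) ha
    have hconj : single g c * ((single u (1 : k) - 1) * h') =
        (single (g * u * g⁻¹) 1 - 1) * (single g c * h') := by
      simp only [mul_sub, sub_mul, mul_one, one_mul, single_mul_single, ← mul_assoc,
        inv_mul_cancel_right]
    simpa [hconj] using single_sub_one_mul_mem_augIdealOf (hV.conj_mem u hu g) (single g c * h')

lemma counitG_eq_zero_of_mem_augIdealOf {V : Subgroup G} {a : MonoidAlgebra k G}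
    (ha : a ∈ augIdealOf k G V) : counitG k G a = 0 :=
  augIdealOf_le_iff (p := LinearMap.ker (counitG k G).toLinearMap).mpr
    (fun u _ h => by simp) ha

lemma antipodeG_mem_augIdealOf {V : Subgroup G} [hV : V.Normal] {a : MonoidAlgebra k G}
    (ha : a ∈ augIdealOf k G V) : antipodeG k G a ∈ augIdealOf k G V := by
  refine augIdealOf_le_iff (p := (augIdealOf k G V).comap (antipodeG k G)).mpr
    (fun u hu h => ?_) ha
  induction h using induction_linear with
  | zero => simp
  | add h h' hh hh' => simpa only [mul_add, map_add] using add_mem hh hh'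
  | single g c =>
    have hS : antipodeG k G ((single u (1 : k) - 1) * single g c) =
        (single (g⁻¹ * u⁻¹ * g) 1 - 1) * single g⁻¹ c := by
      simp only [sub_mul, one_mul, single_mul_single, map_sub, antipodeG_single, mul_inv_rev,
        mul_inv_cancel_right]
    have hu' : g⁻¹ * u⁻¹ * g ∈ V := by simpa using hV.conj_mem u⁻¹ (inv_mem hu) g⁻¹
    simpa [hS] using single_sub_one_mul_mem_augIdealOf hu' (single g⁻¹ c)

lemma comulG_mem_augIdealOf {V : Subgroup G} {a : MonoidAlgebra k G}
    (ha : a ∈ augIdealOf k G V) :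
    comulG k G a ∈
      LinearMap.range (TensorProduct.map (augIdealOf k G V).subtype LinearMap.id) ⊔
        LinearMap.range (TensorProduct.map LinearMap.id (augIdealOf k G V).subtype) := by
  refine (Submodule.mem_comap (f := (comulG k G).toLinearMap)).mp
    (augIdealOf_le_iff.mpr (fun u hu h => ?_) ha)
  have hsplit : comulG k G (single u (1 : k) - 1) =
      (single u 1 - 1) ⊗ₜ[k] single u 1 + 1 ⊗ₜ[k] (single u (1 : k) - 1) := by
    simp [Algebra.TensorProduct.one_def, TensorProduct.sub_tmul, TensorProduct.tmul_sub]
  simp only [Submodule.mem_comap, AlgHom.toLinearMap_apply, map_mul, hsplit]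
  induction comulG k G h using TensorProduct.induction_on with
  | zero => simp
  | tmul x y =>
    rw [add_mul, Algebra.TensorProduct.tmul_mul_tmul, Algebra.TensorProduct.tmul_mul_tmul]
    exact add_mem
      (Submodule.mem_sup_left ⟨⟨_, single_sub_one_mul_mem_augIdealOf hu x⟩ ⊗ₜ _, rfl⟩)
      (Submodule.mem_sup_right ⟨_ ⊗ₜ ⟨_, single_sub_one_mul_mem_augIdealOf hu y⟩, rfl⟩)
  | add w w' hw hw' => simpa only [mul_add] using add_mem hw hw'

theorem isHopfIdeal_augIdealOf (V : Subgroup G) [V.Normal] :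
    IsHopfIdeal k G (augIdealOf k G V) :=
  ⟨fun _ ha h => ⟨mul_mem_augIdealOf_of_normal h ha, mul_mem_augIdealOf ha h⟩,
    fun _ => counitG_eq_zero_of_mem_augIdealOf, fun _ => comulG_mem_augIdealOf,
    fun _ => antipodeG_mem_augIdealOf⟩

lemma mapDomain_rightRel_eq_zero_of_mem_augIdealOf {V : Subgroup G} {a : MonoidAlgebra k G}
    (ha : a ∈ augIdealOf k G V) :
    mapDomainLinearMap k k (Quotient.mk'' : G → Quotient (QuotientGroup.rightRel V)) a = 0 := by
  refine augIdealOf_le_iff (p := LinearMap.ker _).mpr (fun u hu h => ?_) ha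
  induction h using induction_linear with
  | zero => simp
  | add h h' hh hh' => simpa only [mul_add] using add_mem hh hh'
  | single g c =>
    have hcoset : (Quotient.mk'' (u * g) : Quotient (QuotientGroup.rightRel V)) = Quotient.mk'' g :=
      Quotient.sound' (QuotientGroup.rightRel_apply.mpr (by simpa using inv_mem hu))
    simp [sub_mul, single_mul_single, mapDomainLinearMap_single, hcoset]

lemma mem_of_single_sub_one_mem_augIdealOf {V : Subgroup G} {g : G}
    (hg : single g (1 : k) - 1 ∈ augIdealOf k G V) : g ∈ V := by
  have h0 := mapDomain_rightRel_eq_zero_of_mem_augIdealOf hg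
  rw [one_def, map_sub, mapDomainLinearMap_single, mapDomainLinearMap_single, sub_eq_zero,
    single_left_inj one_ne_zero] at h0
  simpa using QuotientGroup.rightRel_apply.mp (Quotient.exact' h0)

lemma sub_mapDomain_mem_augIdealOf {V : Subgroup G} {r : G → G} (hr : ∀ g, g * (r g)⁻¹ ∈ V)
    (a : MonoidAlgebra k G) : a - mapDomain r a ∈ augIdealOf k G V := by
  induction a using induction_linear with
  | zero => simp
  | add a b ha hb => simpa only [mapDomain_add, add_sub_add_comm] using add_mem ha hb
  | single g c =>
    have hg : single g c - single (r g) c =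
        (single (g * (r g)⁻¹) (1 : k) - 1) * single (r g) c := by
      simp [sub_mul, single_mul_single]
    simpa [hg] using single_sub_one_mul_mem_augIdealOf (hr g) (single (r g) c)

def IsCoideal (J : Submodule k (MonoidAlgebra k G)) : Prop :=
  (∀ a ∈ J, counitG k G a = 0) ∧
  (∀ a ∈ J, comulG k G a ∈
    LinearMap.range (TensorProduct.map J.subtype LinearMap.id) ⊔
      LinearMap.range (TensorProduct.map LinearMap.id J.subtype))

lemma IsHopfIdeal.isCoideal (hJ : IsHopfIdeal k G J) : IsCoideal J :=
  ⟨hJ.2.1, hJ.2.2.1⟩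

noncomputable def rightHit (φ : Module.Dual k (MonoidAlgebra k G)) :
    MonoidAlgebra k G →ₗ[k] MonoidAlgebra k G :=
  (TensorProduct.lid k _).toLinearMap ∘ₗ TensorProduct.map φ LinearMap.id ∘ₗ
    (comulG k G).toLinearMap

lemma rightHit_single (φ : Module.Dual k (MonoidAlgebra k G)) (g : G) (c : k) :
    rightHit φ (single g c) = φ (single g 1) • single g c := by
  simp [rightHit, smul_single, mul_comm]

lemma coeff_rightHit (φ : Module.Dual k (MonoidAlgebra k G)) (a : MonoidAlgebra k G) (g : G) :
    (rightHit φ a).coeff g = φ (single g 1) * a.coeff g := by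
  induction a using induction_linear with
  | zero => simp
  | add a b ha hb => simp [ha, hb, mul_add]
  | single h c =>
    rw [rightHit_single]
    rcases eq_or_ne h g with rfl | hne
    · simp
    · simp [hne]

lemma IsCoideal.rightHit_mem (hJ : IsCoideal J)
    {φ : Module.Dual k (MonoidAlgebra k G)} (hφ : J ≤ LinearMap.ker φ)
    {a : MonoidAlgebra k G} (ha : a ∈ J) : rightHit φ a ∈ J := by
  have hleft (t : J ⊗[k] MonoidAlgebra k G) :
      TensorProduct.lid k _ (TensorProduct.map φ LinearMap.id
        (TensorProduct.map J.subtype LinearMap.id t)) = 0 := by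
    induction t using TensorProduct.induction_on with
    | zero => simp
    | tmul j h => simp [LinearMap.mem_ker.mp (hφ j.2)]
    | add t t' ht ht' => simp only [map_add, ht, ht', add_zero]
  have hright (t : MonoidAlgebra k G ⊗[k] J) :
      TensorProduct.lid k _ (TensorProduct.map φ LinearMap.id
        (TensorProduct.map LinearMap.id J.subtype t)) ∈ J := by
    induction t using TensorProduct.induction_on with
    | zero => simp
    | tmul h j => simpa using J.smul_mem _ j.2
    | add t t' ht ht' => simpa only [map_add] using J.add_mem ht ht'
  obtain ⟨_, ⟨t, rfl⟩, _, ⟨t', rfl⟩, hsum⟩ := Submodule.mem_sup.mp (hJ.2 a ha)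
  simpa [rightHit, ← hsum, hleft] using hright t'

lemma IsCoideal.exists_dual (hJ : IsCoideal J)
    {x y : G} (hxy : single x (1 : k) - single y 1 ∉ J) :
    ∃ φ : Module.Dual k (MonoidAlgebra k G),
      J ≤ LinearMap.ker φ ∧ φ (single x 1) ≠ 0 ∧ φ (single y 1) = 0 := by
  obtain ⟨f, hfxy, hfJ⟩ := Submodule.exists_dual_map_eq_bot_of_notMem hxy inferInstance
  refine ⟨f - f (single y 1) • (counitG k G).toLinearMap, fun a ha => ?_, ?_, by simp⟩
  · simp [LinearMap.mem_ker.mp (LinearMap.le_ker_iff_map.mpr hfJ ha), hJ.1 a ha]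
  · simpa using hfxy

theorem IsCoideal.eq_zero_of_mem (hJ : IsCoideal J)
    {a : MonoidAlgebra k G} (ha : a ∈ J)
    (hsep : ∀ x ∈ a.coeff.support, ∀ y ∈ a.coeff.support,
      single x (1 : k) - single y 1 ∈ J → x = y) :
    a = 0 := by
  classical
  induction hn : a.coeff.support.card using Nat.strong_induction_on generalizing a with
  | _ n ih =>
  by_contra ha0
  obtain ⟨x, hx⟩ : a.coeff.support.Nonempty := by simpa using ha0
  by_cases hy : ∃ y ∈ a.coeff.support, y ≠ x
  · obtain ⟨y, hy, hyx⟩ := hy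
    obtain ⟨φ, hφJ, hφx, hφy⟩ := hJ.exists_dual fun h => hyx (hsep x hx y hy h).symm
    have hsupp : (rightHit φ a).coeff.support ⊆ a.coeff.support.erase y := by
      intro g hg
      rw [Finsupp.mem_support_iff, coeff_rightHit] at hg
      exact Finset.mem_erase.mpr ⟨by rintro rfl; simp [hφy] at hg,
        Finsupp.mem_support_iff.mpr (right_ne_zero_of_mul hg)⟩
    have hcard : (rightHit φ a).coeff.support.card < n :=
      hn ▸ (Finset.card_le_card hsupp).trans_lt (Finset.card_erase_lt_of_mem hy)
    have hhit := ih _ hcard (hJ.rightHit_mem hφJ ha)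
      (fun x hx y hy => hsep x (Finset.mem_of_mem_erase (hsupp hx))
        y (Finset.mem_of_mem_erase (hsupp hy))) rfl
    have := congrArg (fun b => b.coeff x) hhit
    simp only [coeff_rightHit, coeff_zero, Finsupp.coe_zero, Pi.zero_apply] at this
    exact mul_ne_zero hφx (Finsupp.mem_support_iff.mp hx) this
  · push Not at hy
    have hsingle : a = single x (a.coeff x) :=
      coeff_injective (Finsupp.support_subset_singleton.mp fun y hy' =>
        Finset.mem_singleton.mpr (hy y hy'))
    have := hJ.1 a ha
    rw [hsingle, counitG_single] at this
    exact Finsupp.mem_support_iff.mp hx this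

lemma single_mul_inv_sub_one_mem (hJ : ∀ a ∈ J, ∀ h, a * h ∈ J) {x y : G}
    (hxy : single x (1 : k) - single y 1 ∈ J) : single (x * y⁻¹) (1 : k) - 1 ∈ J := by
  have h : single (x * y⁻¹) (1 : k) - 1 = (single x 1 - single y 1) * single y⁻¹ 1 := by
    simp [sub_mul, single_mul_single, one_def]
  simpa [h] using hJ _ hxy (single y⁻¹ 1)

def congrOneSubgroup (J : Submodule k (MonoidAlgebra k G)) (hJ : ∀ a ∈ J, ∀ h, a * h ∈ J) :
    Subgroup G :=
  Subgroup.ofDiv {g | single g (1 : k) - 1 ∈ J} ⟨1, by simp [one_def]⟩ fun _ hx _ hy =>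
    single_mul_inv_sub_one_mem hJ (by simpa using J.sub_mem hx hy)

lemma mem_congrOneSubgroup (hJ : ∀ a ∈ J, ∀ h, a * h ∈ J) {g : G} :
    g ∈ congrOneSubgroup J hJ ↔ single g (1 : k) - 1 ∈ J :=
  Iff.rfl

lemma congrOneSubgroup_normal (hJ : ∀ a ∈ J, ∀ h, h * a ∈ J ∧ a * h ∈ J) :
    (congrOneSubgroup J fun a ha h => (hJ a ha h).2).Normal := by
  refine ⟨fun n hn g => ?_⟩
  have h : single (g * n * g⁻¹) (1 : k) - 1 =
      single g 1 * (single n 1 - 1) * single g⁻¹ 1 := by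
    simp [mul_sub, sub_mul, single_mul_single, one_def]
  rw [mem_congrOneSubgroup, h]
  exact (hJ _ (hJ _ hn _).1 _).2

lemma augIdealOf_congrOneSubgroup_le (hJ : ∀ a ∈ J, ∀ h, a * h ∈ J) :
    augIdealOf k G (congrOneSubgroup J hJ) ≤ J :=
  augIdealOf_le_iff.mpr fun _ hu h => hJ _ hu h

theorem IsCoideal.le_augIdealOf_congrOneSubgroup (hJc : IsCoideal J)
    (hJ : ∀ a ∈ J, ∀ h, a * h ∈ J) : J ≤ augIdealOf k G (congrOneSubgroup J hJ) := by
  classical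
  intro a ha
  set N := congrOneSubgroup J hJ
  let r : G → G := fun g => (Quotient.mk'' g : Quotient (QuotientGroup.rightRel N)).out
  have hr (g : G) : g * (r g)⁻¹ ∈ N :=
    QuotientGroup.rightRel_apply.mp (Quotient.mk_out' (s₁ := QuotientGroup.rightRel N) g)
  have hsub := sub_mapDomain_mem_augIdealOf (k := k) hr a
  have hρ : mapDomain r a = 0 := by
    refine hJc.eq_zero_of_mem (by simpa using J.sub_mem ha (augIdealOf_congrOneSubgroup_le hJ hsub))
      fun x hx y hy hxy => ?_
    obtain ⟨g₁, -, rfl⟩ := Finset.mem_image.mp (Finsupp.mapDomain_support hx)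
    obtain ⟨g₂, -, rfl⟩ := Finset.mem_image.mp (Finsupp.mapDomain_support hy)
    have hcoset : (Quotient.mk'' (r g₂) : Quotient (QuotientGroup.rightRel N)) =
        Quotient.mk'' (r g₁) :=
      Quotient.sound' (QuotientGroup.rightRel_apply.mpr (single_mul_inv_sub_one_mem hJ hxy))
    simp only [r, Quotient.out_eq'] at hcoset
    simp only [r, hcoset]
  simpa [hρ] using hsub

end

theorem core_hopf_ideal_of_subgroup :
    IsHopfIdeal k G (augIdealOf k G U.normalCore) ∧
    (∀ a ∈ augIdealOf k G U.normalCore,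
      ∀ h : MonoidAlgebra k G, h * a ∈ augIdealOf k G U) ∧
    (∀ J : Submodule k (MonoidAlgebra k G), IsHopfIdeal k G J →
      (∀ a ∈ J, ∀ h : MonoidAlgebra k G, h * a ∈ augIdealOf k G U) →
      J ≤ augIdealOf k G U.normalCore) := by
  refine ⟨isHopfIdeal_augIdealOf _, fun a ha h =>
    augIdealOf_mono U.normalCore_le (mul_mem_augIdealOf_of_normal h ha), fun J hJ hann => ?_⟩
  have hN := congrOneSubgroup_normal hJ.1
  have hNU : congrOneSubgroup J (fun a ha h => (hJ.1 a ha h).2) ≤ U := fun g hg =>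
    mem_of_single_sub_one_mem_augIdealOf (by simpa using hann _ hg 1)
  exact (hJ.isCoideal.le_augIdealOf_congrOneSubgroup _).trans
    (augIdealOf_mono (Subgroup.normal_le_normalCore.mpr hNU))
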